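/- Let H be the regular hexagon with vertices N=(0,R), NE=(√3R/2, R/2), SE=(√3R/2, −R/2), S=(0,−R), SW=(−√3R/2, −R/2), NW=(−√3R/2, R/2) for some R > 0. Let u be a point on the SW side (the segment from SW to S) and l a point on the SE side or the E side (the segment from S to SE, or the segment from SE to NE) with x(u) < x(l). Then (y(l) − y(u))/(x(l) − x(u)) ≥ −1/√3, and hence dist(u,l) ≤ √3·(x(l) − x(u)) − (y(u) − y(l)). -/
import Mathlib

noncomputable def pt (a b : ℝ) : EuclideanSpace ℝ (Fin 2) := (WithLp.equiv 2 (Fin 2 → ℝ)).symm ![a, b]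

theorem gentle_SW_to_SE_or_E (R : ℝ) (hR : 0 < R)
    (u l : EuclideanSpace ℝ (Fin 2))
    (hu : u ∈ segment ℝ (pt (-(Real.sqrt 3 * R / 2)) (-(R / 2))) (pt 0 (-R)))
    (hl : l ∈ segment ℝ (pt 0 (-R)) (pt (Real.sqrt 3 * R / 2) (-(R / 2))) ∪
      segment ℝ (pt (Real.sqrt 3 * R / 2) (-(R / 2))) (pt (Real.sqrt 3 * R / 2) (R / 2)))
    (hx : u 0 < l 0) :
    -(1 / Real.sqrt 3) ≤ (l 1 - u 1) / (l 0 - u 0) ∧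
      dist u l ≤ Real.sqrt 3 * (l 0 - u 0) - (u 1 - l 1) := by
  set s := Real.sqrt 3 with hs
  have hs2 : s ^ 2 = 3 := Real.sq_sqrt (by norm_num)
  have hspos : 0 < s := Real.sqrt_pos.mpr (by norm_num)
  obtain ⟨a, b, ha, hb, hab, h⟩ := hu
  have hu0 : u 0 = a * (-(s * R / 2)) + b * 0 := by simp [← h, pt]
  have hu1 : u 1 = a * (-(R / 2)) + b * (-R) := by simp [← h, pt]
  -- key: (l 0 - u 0) + s * (l 1 - u 1) ≥ 0
  have key : 0 ≤ (l 0 - u 0) + s * (l 1 - u 1) := by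
    rcases hl with hl | hl
    · obtain ⟨c, d, hc, hd, hcd, h'⟩ := hl
      have hl0 : l 0 = c * 0 + d * (s * R / 2) := by simp [← h', pt]
      have hl1 : l 1 = c * (-R) + d * (-(R / 2)) := by simp [← h', pt]
      have : (l 0 - u 0) + s * (l 1 - u 1) = s * R * d := by
        rw [hl0, hl1, hu0, hu1]; linear_combination (s * R) * hab - (s * R) * hcd
      rw [this]
      exact mul_nonneg (mul_nonneg hspos.le hR.le) hd
    · obtain ⟨c, d, hc, hd, hcd, h'⟩ := hl
      have hl0 : l 0 = c * (s * R / 2) + d * (s * R / 2) := by simp [← h', pt]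
      have hl1 : l 1 = c * (-(R / 2)) + d * (R / 2) := by simp [← h', pt]
      have : (l 0 - u 0) + s * (l 1 - u 1) = s * R * d + s * R := by
        rw [hl0, hl1, hu0, hu1]; linear_combination (s * R) * hab
      rw [this]
      have := mul_nonneg (mul_nonneg hspos.le hR.le) hd
      nlinarith [mul_pos hspos hR]
  have hdx : 0 < l 0 - u 0 := by linarith
  constructor
  · have h1 : (-1) / s ≤ (l 1 - u 1) / (l 0 - u 0) := by
      rw [div_le_div_iff₀ hspos hdx]; linarith
    rw [neg_div] at h1
    simpa using h1
  · have hrhs : 0 ≤ s * (l 0 - u 0) + (l 1 - u 1) := by nlinarith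
    have hd : dist u l = Real.sqrt ((u 0 - l 0) ^ 2 + (u 1 - l 1) ^ 2) := by
      rw [EuclideanSpace.dist_eq, Fin.sum_univ_two, Real.dist_eq, Real.dist_eq, sq_abs, sq_abs]
    rw [hd]
    have hsq : (u 0 - l 0) ^ 2 + (u 1 - l 1) ^ 2 ≤ (s * (l 0 - u 0) + (l 1 - u 1)) ^ 2 := by
      nlinarith [mul_nonneg hdx.le key]
    calc Real.sqrt ((u 0 - l 0) ^ 2 + (u 1 - l 1) ^ 2)
        ≤ Real.sqrt ((s * (l 0 - u 0) + (l 1 - u 1)) ^ 2) := Real.sqrt_le_sqrt hsq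
      _ = s * (l 0 - u 0) + (l 1 - u 1) := Real.sqrt_sq hrhs
      _ = s * (l 0 - u 0) - (u 1 - l 1) := by ring
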